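/- arXiv:2102.02113 — 3 statements merged into one kernel-verified Lean document; each statement's English description precedes it below -/
import Mathlib

section
/- Let K be a field of characteristic 0, let d = e·d′ with e ≥ 2 and d′ ≥ 1 integers. Suppose M(x), G(x) ∈ K[x] are monic of degrees 2d′ and e respectively, and let P(x) = M(G(x)), a monic polynomial of degree 2d. If H(x) (monic of degree d) and L(x) (degree ≤ d−1) are the unique polynomials with P(x) = H(x)^2 − L(x), then deg L ≤ d − e. -/
/-!
Over a field in which `2` is invertible, a monic `M` of degree `2n` has a unique square-root
approximation: a monic `h` of degree `n` with `deg (h² - M) < n`. It is built top-down, each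
correction `h ↦ h - (c/2) X^k` killing the leading coefficient `c` of `h² - M`, and it is unique
because `(H - H')(H + H') = L - L'` has degree `≥ deg (H + H') = n` unless `H = H'`.
Composing `M = h² - l` with `G` gives `M ∘ G = (h ∘ G)² - l ∘ G`, again a decomposition of this
shape, so by uniqueness `L = l ∘ G`, whose degree is `e · deg l ≤ e (d' - 1)`.
-/

open Polynomial

namespace Polynomial

lemma degree_sub_C_coeff_mul_X_pow_lt {R : Type*} [Ring R] {p : R[X]} {m : ℕ}
    (hp : p.degree < ((m + 1 : ℕ) : WithBot ℕ)) :
    (p - C (p.coeff m) * X ^ m).degree < (m : WithBot ℕ) := by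
  rw [degree_lt_iff_coeff_zero]
  intro i hi
  rw [coeff_sub, coeff_C_mul_X_pow]
  rcases hi.eq_or_lt with rfl | hi
  · simp
  · rw [if_neg hi.ne', coeff_eq_zero_of_degree_lt (hp.trans_le (by exact_mod_cast hi)), sub_zero]

lemma Monic.degree_sub_X_pow_lt {R : Type*} [Ring R] {h : R[X]} (hh : h.Monic) {n : ℕ}
    (hdeg : h.natDegree = n) : (h - X ^ n).degree < (n : WithBot ℕ) := by
  nontriviality R
  have hdeg' : h.degree = (n : WithBot ℕ) := by rw [degree_eq_natDegree hh.ne_zero, hdeg]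
  calc (h - X ^ n).degree < h.degree :=
        degree_sub_lt_left (by rw [hdeg', degree_X_pow]) hh.ne_zero (by simp [hh.leadingCoeff])
    _ = n := hdeg'

section SqrtApprox

variable {K : Type*} [Field K] [NeZero (2 : K)]

lemma exists_monic_sq_sub_degree_lt_of_succ {h M : K[X]} (hh : h.Monic) {n k : ℕ}
    (hdeg : h.natDegree = n) (hk : k < n)
    (hR : (h ^ 2 - M).degree < ((n + k + 1 : ℕ) : WithBot ℕ)) :
    ∃ h' : K[X], h'.Monic ∧ h'.natDegree = n ∧
      (h' ^ 2 - M).degree < ((n + k : ℕ) : WithBot ℕ) := by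
  set c := (h ^ 2 - M).coeff (n + k)
  have hXk : (C (c / 2) * X ^ k).degree < h.degree :=
    (degree_C_mul_X_pow_le k _).trans_lt
      (by rw [degree_eq_natDegree hh.ne_zero, hdeg]; exact_mod_cast hk)
  refine ⟨h - C (c / 2) * X ^ k, hh.sub_of_left hXk, ?_, ?_⟩
  · rw [natDegree_eq_of_degree_eq (degree_sub_eq_left_of_degree_lt hXk), hdeg]
  have hsplit : (h - C (c / 2) * X ^ k) ^ 2 - M =
      (h ^ 2 - M - C c * X ^ (n + k)) - (h - X ^ n) * (C c * X ^ k)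
        + C ((c / 2) ^ 2) * X ^ (2 * k) := by
    have hc : C c = 2 * C (c / 2) := by
      rw [← map_ofNat C 2, ← C_mul, mul_div_cancel₀ c two_ne_zero]
    rw [hc, map_pow]
    ring
  have hcorr : ((h - X ^ n) * (C c * X ^ k)).degree < ((n + k : ℕ) : WithBot ℕ) :=
    calc ((h - X ^ n) * (C c * X ^ k)).degree ≤ (h - X ^ n).degree + (C c * X ^ k).degree :=
          degree_mul_le _ _
      _ ≤ (h - X ^ n).degree + (k : WithBot ℕ) := by grw [degree_C_mul_X_pow_le k c]
      _ < (n : WithBot ℕ) + (k : WithBot ℕ) :=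
          WithBot.add_lt_add_right WithBot.coe_ne_bot (hh.degree_sub_X_pow_lt hdeg)
      _ = ((n + k : ℕ) : WithBot ℕ) := by norm_cast
  have hsq : (C ((c / 2) ^ 2) * X ^ (2 * k)).degree < ((n + k : ℕ) : WithBot ℕ) :=
    (degree_C_mul_X_pow_le _ _).trans_lt (by exact_mod_cast (show 2 * k < n + k by omega))
  rw [hsplit]
  exact (degree_add_le _ _).trans_lt <| max_lt
    ((degree_sub_le _ _).trans_lt (max_lt (degree_sub_C_coeff_mul_X_pow_lt hR) hcorr)) hsq

theorem exists_monic_sq_sub_degree_lt {M : K[X]} (hM : M.Monic) {n : ℕ}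
    (hMdeg : M.natDegree = 2 * n) :
    ∃ h : K[X], h.Monic ∧ h.natDegree = n ∧ (h ^ 2 - M).degree < n := by
  suffices ∀ k ≤ n, ∃ h : K[X], h.Monic ∧ h.natDegree = n ∧ (h ^ 2 - M).degree < ↑(n + k) by
    simpa using this 0 n.zero_le
  intro k hk
  induction hk using Nat.decreasingInduction with
  | self =>
    refine ⟨X ^ n, monic_X_pow n, natDegree_X_pow n, ?_⟩
    rw [← pow_mul, mul_comm, ← two_mul]
    calc (X ^ (2 * n) - M).degree < (X ^ (2 * n) : K[X]).degree :=
          degree_sub_lt_left (by rw [degree_X_pow, degree_eq_natDegree hM.ne_zero, hMdeg])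
            (monic_X_pow _).ne_zero (by rw [leadingCoeff_X_pow, hM.leadingCoeff])
      _ = ((2 * n : ℕ) : WithBot ℕ) := degree_X_pow _
  | of_succ k hk ih =>
    obtain ⟨h, hh, hdeg, hR⟩ := ih
    exact exists_monic_sq_sub_degree_lt_of_succ hh hdeg hk hR

end SqrtApprox

theorem Monic.eq_and_eq_of_sq_sub_eq_sq_sub {R : Type*} [CommRing R] [IsDomain R]
    [NeZero (2 : R)] {H H' L L' : R[X]} (hH : H.Monic) (hH' : H'.Monic) {n : ℕ}
    (hHdeg : H.natDegree = n) (hH'deg : H'.natDegree = n) (hL : L.degree < n)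
    (hL' : L'.degree < n) (heq : H ^ 2 - L = H' ^ 2 - L') : H = H' ∧ L = L' := by
  suffices hHH' : H = H' by
    subst hHH'
    exact ⟨rfl, sub_right_injective heq⟩
  by_contra hne
  have hlc : H.leadingCoeff + H'.leadingCoeff ≠ 0 := by
    rw [hH.leadingCoeff, hH'.leadingCoeff, one_add_one_eq_two]
    exact two_ne_zero
  have hsum : (H + H').degree = n := by
    rw [degree_add_eq_of_leadingCoeff_add_ne_zero hlc, degree_eq_natDegree hH.ne_zero,
      degree_eq_natDegree hH'.ne_zero, hHdeg, hH'deg, max_self]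
  have hprod : (H - H') * (H + H') = L - L' := by linear_combination heq
  have hge : (n : WithBot ℕ) ≤ (L - L').degree := by
    rw [← hprod, Polynomial.degree_mul, hsum]
    exact le_add_of_nonneg_left (zero_le_degree_iff.mpr (sub_ne_zero.mpr hne))
  exact hge.not_gt ((degree_sub_le _ _).trans_lt (max_lt hL hL'))

end Polynomial

/-- If `d = e·d'` with `e ≥ 2`, `d' ≥ 1`, `M` and `G` are monic of degrees `2d'` and `e`,
and `P = M ∘ G = H² - L` is the square-root decomposition of the composite polynomial
(`H` monic of degree `d`, `deg L ≤ d - 1`), then in fact `deg L ≤ d - e`. -/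
theorem stmt1 (K : Type) [Field K] [CharZero K] (e d' : ℕ) (he : 2 ≤ e) (hd' : 1 ≤ d')
    (M G H L : K[X]) (hM : M.Monic) (hMdeg : M.natDegree = 2 * d')
    (hG : G.Monic) (hGdeg : G.natDegree = e)
    (hH : H.Monic) (hHdeg : H.natDegree = e * d')
    (hL : L.degree < ((e * d' : ℕ) : WithBot ℕ))
    (hdec : M.comp G = H ^ 2 - L) :
    L.degree ≤ ((e * d' - e : ℕ) : WithBot ℕ) := by
  obtain ⟨h, hh, hhdeg, hl⟩ := exists_monic_sq_sub_degree_lt hM hMdeg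
  set l := h ^ 2 - M
  have hldeg : l.natDegree ≤ d' - 1 := by
    rcases eq_or_ne l 0 with hl0 | hl0
    · simp [hl0]
    · exact Nat.le_sub_one_of_lt ((natDegree_lt_iff_degree_lt hl0).mpr hl)
  have hlG : (l.comp G).degree ≤ ((e * d' - e : ℕ) : WithBot ℕ) := by
    refine degree_le_of_natDegree_le ?_
    rw [natDegree_comp, hGdeg, Nat.mul_comm, ← Nat.mul_sub_one]
    exact Nat.mul_le_mul_left e hldeg
  have hcomp : M.comp G = (h.comp G) ^ 2 - l.comp G := by
    rw [sub_comp, pow_comp]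
    ring
  have hLl : L = l.comp G :=
    (hH.eq_and_eq_of_sq_sub_eq_sq_sub (hh.comp hG (by omega)) hHdeg
      (by rw [natDegree_comp, hhdeg, hGdeg, Nat.mul_comm]) hL
      (hlG.trans_lt (by exact_mod_cast (Nat.sub_lt (Nat.mul_pos (by omega) hd') (by omega))))
      (hdec.symm.trans hcomp)).2
  rw [hLl]
  exact hlG
end

section
/- Let K be a field of characteristic 0, n ≥ 1, and let (a_{ij})_{1≤i≤n, 1≤j≤e} ∈ K^{en} be a tuple such that for each j = 1,…,e−1, the elementary symmetric polynomials satisfy s_j(a_{i1},…,a_{ie}) = s_j(a_{11},…,a_{1e}) for all i. Define g(x) = x^e + Σ_{j=1}^{e−1} (−1)^j s_j(a_{11},…,a_{1e}) x^{e−j} and m(x) = ∏_{i=1}^n (x + (−1)^e s_e(a_{i1},…,a_{ie})). Then ∏_{i,j} (x − a_{ij}) = m(g(x)) in K[x]. -/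
open Polynomial

theorem aux_block (K : Type) [Field K] (e : ℕ) (he : 2 ≤ e) (b : Fin e → K) :
    (∏ j : Fin e, (X - C (b j))) =
      X ^ e + (∑ j ∈ Finset.Icc 1 (e - 1),
          C ((-1 : K) ^ j * (Multiset.map b Finset.univ.val).esymm j) * X ^ (e - j))
        + C ((-1 : K) ^ e * (Multiset.map b Finset.univ.val).esymm e) := by
  have hcard : Multiset.card (Multiset.map b Finset.univ.val) = e := by simp
  have h1 : (∏ j : Fin e, (X - C (b j)))
      = ((Multiset.map b Finset.univ.val).map (fun t => X - C t)).prod := by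
    rw [Finset.prod, Multiset.map_map]; rfl
  rw [h1, Multiset.prod_X_sub_X_eq_sum_esymm, hcard]
  have hrange : Finset.range (e + 1) = insert 0 (insert e (Finset.Icc 1 (e - 1))) := by
    ext x
    simp only [Finset.mem_range, Finset.mem_insert, Finset.mem_Icc]
    omega
  rw [hrange, Finset.sum_insert, Finset.sum_insert]
  · have h0 : (Multiset.map b Finset.univ.val).esymm 0 = 1 := by
      simp [Multiset.esymm]
    rw [h0]
    simp only [map_one, one_mul, Nat.sub_zero, Nat.sub_self, pow_zero, mul_one,
      map_mul, map_pow, map_neg]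
    simp only [mul_assoc]
    ring
  · simp only [Finset.mem_Icc]; omega
  · simp only [Finset.mem_insert, Finset.mem_Icc]; omega

/-- If all `n` blocks `a i •` of `e` elements of `K` share the same elementary symmetric
functions `s_1, …, s_{e-1}`, then with
`g(x) = x^e + ∑_{j=1}^{e-1} (-1)^j s_j(a 0 •) x^{e-j}` and
`m(x) = ∏_{i=1}^n (x + (-1)^e s_e(a i •))` one has `∏_{i,j} (x - a i j) = m(g(x))`. -/
theorem stmt3 (K : Type) [Field K] [CharZero K] (e n : ℕ) (he : 2 ≤ e) (hn : 1 ≤ n)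
    (a : Fin n → Fin e → K)
    (hsym : ∀ j : ℕ, 1 ≤ j → j ≤ e - 1 → ∀ i : Fin n,
      (Multiset.map (a i) Finset.univ.val).esymm j
        = (Multiset.map (a ⟨0, by omega⟩) Finset.univ.val).esymm j) :
    (∏ i : Fin n, ∏ j : Fin e, (X - C (a i j))) =
      (∏ i : Fin n,
          (X + C ((-1 : K) ^ e * (Multiset.map (a i) Finset.univ.val).esymm e))).comp
        (X ^ e + ∑ j ∈ Finset.Icc 1 (e - 1),
          C ((-1 : K) ^ j * (Multiset.map (a ⟨0, by omega⟩) Finset.univ.val).esymm j)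
            * X ^ (e - j)) := by
  rw [Polynomial.prod_comp]
  refine Finset.prod_congr rfl fun i _ => ?_
  rw [add_comp, X_comp, C_comp, aux_block K e he (a i)]
  congr 2
  refine Finset.sum_congr rfl fun j hj => ?_
  simp only [Finset.mem_Icc] at hj
  rw [hsym j hj.1 hj.2 i]
end

section
/- Let K be a field containing a primitive cube root of unity ζ₃, let n ≥ 1, and let B_n be the affine K-scheme with coordinate ring K[T_{ij} : 1≤i≤n, 1≤j≤3] modulo the relations T_{i1}+T_{i2}+T_{i3} = 0 for all i and T_{i1}T_{i2}+T_{i1}T_{i3}+T_{i2}T_{i3} = T_{11}T_{12}+T_{11}T_{13}+T_{12}T_{13} for all i. Then B_n is isomorphic over K to the closed subscheme of Spec K[z_{i1}, z_{i2} : 1≤i≤n] defined by the equations z_{11}z_{12} = z_{21}z_{22} = ⋯ = z_{n1}z_{n2}, via the map z_{ij} ↦ T_{i1} − ζ₃^j T_{i2}. -/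
/-!
Since `ζ² + ζ + 1 = 0`, the quadratic form `a² + ab + b²` factors as `(a - ζ b)(a - ζ² b)`, and
on `a + b + c = 0` it equals `-(ab + ac + bc)`. So the linear substitution
`z_{ij} = T_{i0} - ζ^{j+1} T_{i1}`, which is invertible because `ζ ≠ ζ²`, carries the relations
`z_{i0} z_{i1} = z_{00} z_{01}` to the relations `e₂(T_i) = e₂(T_0)` modulo the linear ones, and
back.
-/

open MvPolynomial

noncomputable def stmtBnIdeal (K : Type) [Field K] (n : ℕ) :
    Ideal (MvPolynomial (Fin (n + 1) × Fin 3) K) :=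
  Ideal.span
    ((Set.range fun i : Fin (n + 1) =>
        (X (i, 0) + X (i, 1) + X (i, 2) : MvPolynomial (Fin (n + 1) × Fin 3) K)) ∪
      (Set.range fun i : Fin (n + 1) =>
        (X (i, 0) * X (i, 1) + X (i, 0) * X (i, 2) + X (i, 1) * X (i, 2)
          - (X (0, 0) * X (0, 1) + X (0, 0) * X (0, 2) + X (0, 1) * X (0, 2)) :
          MvPolynomial (Fin (n + 1) × Fin 3) K)))

noncomputable def stmtZnIdeal (K : Type) [Field K] (n : ℕ) :
    Ideal (MvPolynomial (Fin (n + 1) × Fin 2) K) :=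
  Ideal.span
    (Set.range fun i : Fin (n + 1) =>
      (X (i, 0) * X (i, 1) - X (0, 0) * X (0, 1) :
        MvPolynomial (Fin (n + 1) × Fin 2) K))

namespace IsPrimitiveRoot

variable {R : Type*} [CommRing R] {ζ : R}

theorem sq_add_self_add_one [IsDomain R] (hζ : IsPrimitiveRoot ζ 3) : ζ ^ 2 + ζ + 1 = 0 := by
  have h : 1 + ζ + ζ ^ 2 = 0 := by
    simpa [Finset.sum_range_succ] using hζ.geom_sum_eq_zero (by norm_num)
  linear_combination h

theorem sq_sub_self_ne_zero (hζ : IsPrimitiveRoot ζ 3) : ζ ^ 2 - ζ ≠ 0 :=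
  sub_ne_zero.mpr fun h => by
    simpa using hζ.pow_inj (by norm_num) (by norm_num) (h.trans (pow_one ζ).symm)

end IsPrimitiveRoot

theorem sub_mul_mul_sub_sq_mul {A : Type*} [CommRing A] {ω : A} (hω : ω ^ 2 + ω + 1 = 0)
    (a b c : A) :
    (a - ω * b) * (a - ω ^ 2 * b) = (a + b) * (a + b + c) - (a * b + a * c + b * c) := by
  linear_combination (-(a * b) + (ω - 1) * b ^ 2) * hω

namespace Ideal

variable {R A B : Type*} [CommSemiring R] [CommRing A] [CommRing B] [Algebra R A] [Algebra R B]
  {I : Ideal A} {J : Ideal B}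

noncomputable def quotientEquivAlgOfComp (f : A →ₐ[R] B) (g : B →ₐ[R] A)
    (hf : I ≤ J.comap f) (hg : J ≤ I.comap g)
    (hgf : (Quotient.mkₐ R I).comp (g.comp f) = Quotient.mkₐ R I)
    (hfg : (Quotient.mkₐ R J).comp (f.comp g) = Quotient.mkₐ R J) :
    (A ⧸ I) ≃ₐ[R] (B ⧸ J) :=
  AlgEquiv.ofAlgHom (quotientMapₐ J f hf) (quotientMapₐ I g hg)
    (Quotient.algHom_ext R (AlgHom.ext fun b => congr($hfg b)))
    (Quotient.algHom_ext R (AlgHom.ext fun a => congr($hgf a)))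

theorem quotientEquivAlgOfComp_mk (f : A →ₐ[R] B) (g : B →ₐ[R] A)
    (hf : I ≤ J.comap f) (hg : J ≤ I.comap g)
    (hgf : (Quotient.mkₐ R I).comp (g.comp f) = Quotient.mkₐ R I)
    (hfg : (Quotient.mkₐ R J).comp (f.comp g) = Quotient.mkₐ R J) (a : A) :
    quotientEquivAlgOfComp f g hf hg hgf hfg (Quotient.mk I a) = Quotient.mk J (f a) :=
  rfl

end Ideal

section Diagonalization

variable {K : Type} [Field K] {ζ : K} {n : ℕ}

theorem sum_mem_stmtBnIdeal (i : Fin (n + 1)) :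
    (X (i, 0) + X (i, 1) + X (i, 2) : MvPolynomial (Fin (n + 1) × Fin 3) K) ∈ stmtBnIdeal K n :=
  Ideal.subset_span (Or.inl ⟨i, rfl⟩)

theorem esymm_two_sub_mem_stmtBnIdeal (i : Fin (n + 1)) :
    (X (i, 0) * X (i, 1) + X (i, 0) * X (i, 2) + X (i, 1) * X (i, 2)
        - (X (0, 0) * X (0, 1) + X (0, 0) * X (0, 2) + X (0, 1) * X (0, 2)) :
        MvPolynomial (Fin (n + 1) × Fin 3) K) ∈ stmtBnIdeal K n :=
  Ideal.subset_span (Or.inr ⟨i, rfl⟩)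

theorem mul_sub_mul_mem_stmtZnIdeal (i : Fin (n + 1)) :
    (X (i, 0) * X (i, 1) - X (0, 0) * X (0, 1) : MvPolynomial (Fin (n + 1) × Fin 2) K)
      ∈ stmtZnIdeal K n :=
  Ideal.subset_span ⟨i, rfl⟩

variable (ζ n)

noncomputable def diagonalize :
    MvPolynomial (Fin (n + 1) × Fin 2) K →ₐ[K] MvPolynomial (Fin (n + 1) × Fin 3) K :=
  aeval fun p => X (p.1, 0) - C (ζ ^ ((p.2 : ℕ) + 1)) * X (p.1, 1)

/-- Solves `z₀ = T₀ - ζ T₁`, `z₁ = T₀ - ζ² T₁`, `T₀ + T₁ + T₂ = 0` for the `T`s. -/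
noncomputable def undiagonalize :
    MvPolynomial (Fin (n + 1) × Fin 3) K →ₐ[K] MvPolynomial (Fin (n + 1) × Fin 2) K :=
  aeval fun p => C (ζ ^ 2 - ζ)⁻¹ *
    (C (![ζ ^ 2, 1, ζ] p.2) * X (p.1, 0) - C (![ζ, 1, ζ ^ 2] p.2) * X (p.1, 1))

variable {ζ n}

theorem diagonalize_X_zero (i : Fin (n + 1)) :
    diagonalize ζ n (X (i, 0)) = X (i, 0) - C ζ * X (i, 1) := by
  simp [diagonalize]

theorem diagonalize_X_one (i : Fin (n + 1)) :
    diagonalize ζ n (X (i, 1)) = X (i, 0) - C ζ ^ 2 * X (i, 1) := by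
  simp [diagonalize]

theorem undiagonalize_X_zero (i : Fin (n + 1)) :
    undiagonalize ζ n (X (i, 0)) = C (ζ ^ 2 - ζ)⁻¹ * (C ζ ^ 2 * X (i, 0) - C ζ * X (i, 1)) := by
  simp [undiagonalize]

theorem undiagonalize_X_one (i : Fin (n + 1)) :
    undiagonalize ζ n (X (i, 1)) = C (ζ ^ 2 - ζ)⁻¹ * (X (i, 0) - X (i, 1)) := by
  simp [undiagonalize]

theorem undiagonalize_X_two (i : Fin (n + 1)) :
    undiagonalize ζ n (X (i, 2)) = C (ζ ^ 2 - ζ)⁻¹ * (C ζ * X (i, 0) - C ζ ^ 2 * X (i, 1)) := by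
  simp [undiagonalize]

theorem C_sq_add_C_add_one {σ : Type*} (hζ : IsPrimitiveRoot ζ 3) :
    (C ζ : MvPolynomial σ K) ^ 2 + C ζ + 1 = 0 := by
  simpa using congr(C $(hζ.sq_add_self_add_one))

theorem C_inv_mul_C_sq_sub_C {σ : Type*} (hζ : IsPrimitiveRoot ζ 3) :
    C (ζ ^ 2 - ζ)⁻¹ * (C ζ ^ 2 - C ζ : MvPolynomial σ K) = 1 := by
  simpa using congr(C $(inv_mul_cancel₀ hζ.sq_sub_self_ne_zero))

theorem undiagonalize_comp_diagonalize (hζ : IsPrimitiveRoot ζ 3) :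
    (undiagonalize ζ n).comp (diagonalize ζ n) = AlgHom.id K _ := by
  have h := C_inv_mul_C_sq_sub_C (σ := Fin (n + 1) × Fin 2) hζ
  ext ⟨i, j⟩ : 1
  fin_cases j
  · show undiagonalize ζ n (diagonalize ζ n (X (i, 0))) = X (i, 0)
    simp only [diagonalize_X_zero, map_sub, map_mul, algHom_C, algebraMap_eq,
      undiagonalize_X_zero, undiagonalize_X_one]
    linear_combination X (i, 0) * h
  · show undiagonalize ζ n (diagonalize ζ n (X (i, 1))) = X (i, 1)
    simp only [diagonalize_X_one, map_sub, map_mul, map_pow, algHom_C, algebraMap_eq,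
      undiagonalize_X_zero, undiagonalize_X_one]
    linear_combination X (i, 1) * h

theorem undiagonalize_sum (hζ : IsPrimitiveRoot ζ 3) (i : Fin (n + 1)) :
    undiagonalize ζ n (X (i, 0)) + undiagonalize ζ n (X (i, 1)) + undiagonalize ζ n (X (i, 2))
      = 0 := by
  rw [undiagonalize_X_zero, undiagonalize_X_one, undiagonalize_X_two]
  linear_combination (C (ζ ^ 2 - ζ)⁻¹ * (X (i, 0) - X (i, 1))) * C_sq_add_C_add_one hζ

theorem diagonalize_undiagonalize_X_sub_mem (hζ : IsPrimitiveRoot ζ 3)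
    (p : Fin (n + 1) × Fin 3) :
    diagonalize ζ n (undiagonalize ζ n (X p)) - X p ∈ stmtBnIdeal K n := by
  have h₁ := C_sq_add_C_add_one (σ := Fin (n + 1) × Fin 3) hζ
  have h₂ := C_inv_mul_C_sq_sub_C (σ := Fin (n + 1) × Fin 3) hζ
  obtain ⟨i, k⟩ := p
  fin_cases k
  · convert (stmtBnIdeal K n).zero_mem using 1
    show diagonalize ζ n (undiagonalize ζ n (X (i, 0))) - X (i, 0) = 0
    simp only [undiagonalize_X_zero, map_sub, map_mul, map_pow, algHom_C, algebraMap_eq,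
      diagonalize_X_zero, diagonalize_X_one]
    linear_combination X (i, 0) * h₂
  · convert (stmtBnIdeal K n).zero_mem using 1
    show diagonalize ζ n (undiagonalize ζ n (X (i, 1))) - X (i, 1) = 0
    simp only [undiagonalize_X_one, map_sub, map_mul, algHom_C, algebraMap_eq,
      diagonalize_X_zero, diagonalize_X_one]
    linear_combination X (i, 1) * h₂
  · convert neg_mem (sum_mem_stmtBnIdeal i) using 1
    show diagonalize ζ n (undiagonalize ζ n (X (i, 2))) - X (i, 2) = _
    simp only [undiagonalize_X_two, map_sub, map_mul, map_pow, algHom_C, algebraMap_eq,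
      diagonalize_X_zero, diagonalize_X_one]
    linear_combination (-X (i, 0) - X (i, 1)) * h₂
      + C (ζ ^ 2 - ζ)⁻¹ * C ζ * (C ζ - 1) * X (i, 1) * h₁

theorem stmtZnIdeal_le_comap_diagonalize (hζ : IsPrimitiveRoot ζ 3) :
    stmtZnIdeal K n ≤ (stmtBnIdeal K n).comap (diagonalize ζ n) := by
  refine Ideal.span_le.mpr (Set.range_subset_iff.mpr fun i => ?_)
  have diagonalize_prod (l : Fin (n + 1)) : diagonalize ζ n (X (l, 0) * X (l, 1))
      = (X (l, 0) + X (l, 1)) * (X (l, 0) + X (l, 1) + X (l, 2))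
        - (X (l, 0) * X (l, 1) + X (l, 0) * X (l, 2) + X (l, 1) * X (l, 2)) := by
    rw [map_mul, diagonalize_X_zero, diagonalize_X_one]
    exact sub_mul_mul_sub_sq_mul (C_sq_add_C_add_one hζ) (X (l, 0)) (X (l, 1)) (X (l, 2))
  rw [SetLike.mem_coe, Ideal.mem_comap, map_sub, diagonalize_prod, diagonalize_prod]
  convert sub_mem
    (sub_mem (Ideal.mul_mem_left _ (X (i, 0) + X (i, 1)) (sum_mem_stmtBnIdeal i))
      (Ideal.mul_mem_left _ (X (0, 0) + X (0, 1)) (sum_mem_stmtBnIdeal 0)))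
    (esymm_two_sub_mem_stmtBnIdeal i) using 1
  ring

theorem stmtBnIdeal_le_comap_undiagonalize (hζ : IsPrimitiveRoot ζ 3) :
    stmtBnIdeal K n ≤ (stmtZnIdeal K n).comap (undiagonalize ζ n) := by
  refine Ideal.span_le.mpr (Set.union_subset (Set.range_subset_iff.mpr fun i => ?_)
    (Set.range_subset_iff.mpr fun i => ?_))
  · simp [undiagonalize_sum hζ i]
  · have undiagonalize_esymm (l : Fin (n + 1)) :
        undiagonalize ζ n (X (l, 0) * X (l, 1) + X (l, 0) * X (l, 2) + X (l, 1) * X (l, 2))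
          = -(X (l, 0) * X (l, 1)) := by
      have h₀ := congr($(undiagonalize_comp_diagonalize hζ) (X (l, 0)))
      have h₁ := congr($(undiagonalize_comp_diagonalize hζ) (X (l, 1)))
      simp only [AlgHom.comp_apply, AlgHom.id_apply, diagonalize_X_zero, diagonalize_X_one,
        map_sub, map_mul, map_pow, algHom_C, algebraMap_eq] at h₀ h₁
      have := sub_mul_mul_sub_sq_mul (C_sq_add_C_add_one hζ) (undiagonalize ζ n (X (l, 0)))
        (undiagonalize ζ n (X (l, 1))) (undiagonalize ζ n (X (l, 2)))
      rw [h₀, h₁, undiagonalize_sum hζ, mul_zero, zero_sub] at this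
      simp only [map_add, map_mul]
      linear_combination this
    rw [SetLike.mem_coe, Ideal.mem_comap, map_sub, undiagonalize_esymm, undiagonalize_esymm]
    convert neg_mem (mul_sub_mul_mem_stmtZnIdeal i) using 1
    ring

end Diagonalization

/-- If `K` contains a primitive cube root of unity `ζ₃`, then `B_n` is isomorphic over
`K` to the closed subscheme `{z_{11}z_{12} = ⋯ = z_{n1}z_{n2}}` of affine `2n`-space,
via `z_{ij} ↦ T_{i1} - ζ₃ʲ T_{i2}` (an isomorphism of coordinate rings). -/
theorem stmt11 (K : Type) [Field K] (ζ : K) (hζ : IsPrimitiveRoot ζ 3) (n : ℕ) :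
    ∃ e : (MvPolynomial (Fin (n + 1) × Fin 2) K ⧸ stmtZnIdeal K n)
            ≃ₐ[K] (MvPolynomial (Fin (n + 1) × Fin 3) K ⧸ stmtBnIdeal K n),
      ∀ (i : Fin (n + 1)) (j : Fin 2),
        e (Ideal.Quotient.mk (stmtZnIdeal K n) (X (i, j)))
          = Ideal.Quotient.mk (stmtBnIdeal K n)
              (X (i, 0) - C (ζ ^ ((j : ℕ) + 1)) * X (i, 1)) := by
  have hgf : (Ideal.Quotient.mkₐ K _).comp ((undiagonalize ζ n).comp (diagonalize ζ n))
      = Ideal.Quotient.mkₐ K (stmtZnIdeal K n) := by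
    rw [undiagonalize_comp_diagonalize hζ, AlgHom.comp_id]
  have hfg : (Ideal.Quotient.mkₐ K _).comp ((diagonalize ζ n).comp (undiagonalize ζ n))
      = Ideal.Quotient.mkₐ K (stmtBnIdeal K n) :=
    MvPolynomial.algHom_ext fun p =>
      Ideal.Quotient.eq.mpr (diagonalize_undiagonalize_X_sub_mem hζ p)
  refine ⟨Ideal.quotientEquivAlgOfComp _ _ (stmtZnIdeal_le_comap_diagonalize hζ)
    (stmtBnIdeal_le_comap_undiagonalize hζ) hgf hfg, fun i j => ?_⟩
  rw [Ideal.quotientEquivAlgOfComp_mk, diagonalize, aeval_X]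
end
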